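/- arXiv:2105.10281 — 4 statements merged into one kernel-verified Lean document; each statement's English description precedes it below -/
import Mathlib

section
/- Let R be a commutative ring, M an R-module, and k a natural number. Define F^k(M) to be the intersection, over all prime ideals p of R of height strictly less than k, of the kernels of the localization maps M → M_p. Then for every finitely generated submodule M' of M, one has M' ⊆ F^k(M) if and only if every prime ideal in the support of M' has height at least k. -/
/-- For a finitely generated submodule `M'` of an `R`-module `M`, `M'` is contained in
`F^k(M) = ⋂_{ht p < k} ker (M → M_p)` iff every prime in the support of `M'` has height `≥ k`. -/
theorem stmt0 {R : Type*} [CommRing R] {M : Type*} [AddCommGroup M] [Module R M]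
    (k : ℕ) (M' : Submodule R M) (hM' : M'.FG) :
    (M' ≤ ⨅ (p : PrimeSpectrum R) (_ : Order.height p < (k : ℕ∞)),
        LinearMap.ker (LocalizedModule.mkLinearMap p.asIdeal.primeCompl M)) ↔
      ∀ p ∈ Module.support R M', (k : ℕ∞) ≤ Order.height p := by
  constructor
  · intro h p hp
    by_contra hk
    push_neg at hk
    rw [Module.mem_support_iff'] at hp
    obtain ⟨m, hm⟩ := hp
    have h1 := h m.2
    simp only [Submodule.mem_iInf] at h1
    have h2 := h1 p hk
    rw [LocalizedModule.mem_ker_mkLinearMap_iff] at h2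
    obtain ⟨r, hr, hr0⟩ := h2
    exact hm r hr (Subtype.ext hr0)
  · intro h x hx
    simp only [Submodule.mem_iInf]
    intro p hp
    rw [LocalizedModule.mem_ker_mkLinearMap_iff]
    have hps : p ∉ Module.support R ↥M' := fun hs => absurd hp (not_lt.2 (h p hs))
    rw [Module.notMem_support_iff'] at hps
    obtain ⟨r, hr, hr0⟩ := hps ⟨x, hx⟩
    exact ⟨r, hr, congrArg Subtype.val hr0⟩
end

section
/- Let k be a field, R = k[x₁,…,xₙ] a polynomial ring, m = (x₁,…,xₙ) the ideal generated by the variables, and M a finitely generated R-module. Then the m-torsion submodule Γ_m(M) = { x ∈ M | ∃ t, m^t • x = 0 } is a finite-dimensional k-vector space. -/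
open MvPolynomial Submodule

private lemma prodpow_mem' {R : Type*} [CommSemiring R] (I : Ideal R) {ι : Type*}
    [DecidableEq ι] (s : Finset ι) (x : ι → R) (e : ι → ℕ) (h : ∀ i ∈ s, x i ∈ I) :
    (∏ i ∈ s, x i ^ e i) ∈ I ^ (∑ i ∈ s, e i) := by
  induction s using Finset.induction_on with
  | empty => simp [Ideal.one_eq_top]
  | insert a s ha ih =>
    rw [Finset.prod_insert ha, Finset.sum_insert ha, pow_add]
    exact Ideal.mul_mem_mul (Ideal.pow_mem_pow (h a (Finset.mem_insert_self a s)) _)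
      (ih fun i hi => h i (Finset.mem_insert_of_mem hi))

private lemma monomial_mem_pow {k : Type*} [CommSemiring k] {n : ℕ}
    (μ : Fin n →₀ ℕ) (c : k) {t : ℕ} (h : t ≤ ∑ i ∈ μ.support, μ i) :
    (monomial μ c : MvPolynomial (Fin n) k) ∈
      (Ideal.span (Set.range (X : Fin n → MvPolynomial (Fin n) k))) ^ t := by
  classical
  have h1 : (monomial μ c : MvPolynomial (Fin n) k)
      = C c * ∏ i ∈ μ.support, X i ^ μ i := by
    rw [prod_X_pow_eq_monomial, C_mul_monomial, mul_one]
  rw [h1]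
  exact Ideal.mul_mem_left _ _ <| Ideal.pow_le_pow_right h <|
    prodpow_mem' _ _ _ _ fun i _ => Ideal.subset_span ⟨i, rfl⟩

/-- Let `R = k[x₁,…,xₙ]`, `m` the ideal generated by the variables, and `M` a finitely
generated `R`-module.  Then `Γ_m(M) = {x | ∃ t, m^t • x = 0}` is a finite-dimensional
`k`-vector space. -/
theorem stmt4 (k : Type*) [Field k] (n : ℕ)
    (M : Type*) [AddCommGroup M] [Module (MvPolynomial (Fin n) k) M]
    [Module k M] [IsScalarTower k (MvPolynomial (Fin n) k) M]
    [Module.Finite (MvPolynomial (Fin n) k) M] :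
    FiniteDimensional k
      ↥(Submodule.restrictScalars k
        (⨆ t : ℕ, Submodule.torsionBySet (MvPolynomial (Fin n) k) M
          ((Ideal.span (Set.range (MvPolynomial.X : Fin n → MvPolynomial (Fin n) k)) ^ t :
              Ideal (MvPolynomial (Fin n) k)) : Set (MvPolynomial (Fin n) k)))) := by
  classical
  set R := MvPolynomial (Fin n) k with hR
  set m : Ideal R := Ideal.span (Set.range X) with hm
  set f : ℕ → Submodule R M :=
    fun t => Submodule.torsionBySet R M ((m ^ t : Ideal R) : Set R) with hf
  have hmono : Monotone f := monotone_nat_of_le_succ fun t =>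
    Submodule.torsionBySet_le_torsionBySet_of_subset (Ideal.pow_le_pow_right (Nat.le_succ t))
  -- the supremum is finitely generated, hence contained in a single torsion submodule
  obtain ⟨G, hG⟩ : (⨆ t, f t).FG := IsNoetherian.noetherian _
  have hGmem : ∀ g ∈ G, ∃ t, g ∈ f t := fun g hg =>
    (Submodule.mem_iSup_of_directed f hmono.directed_le).mp (hG ▸ Submodule.subset_span hg)
  choose! tg htg using hGmem
  set T : ℕ := G.sup tg with hT
  have hNle : (⨆ t, f t) ≤ f (T + 1) := by
    rw [← hG]
    exact Submodule.span_le.mpr fun g hg =>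
      hmono (le_trans (Finset.le_sup hg) (Nat.le_succ T)) (htg g hg)
  -- now show `f (T+1)` is finite dimensional over `k`
  set t : ℕ := T
  obtain ⟨S, hS⟩ : (f (t + 1)).FG := IsNoetherian.noetherian _
  set s : Set M := Set.range (fun p : (Fin n → Fin (t + 1)) × {x // x ∈ S} =>
    ((monomial (Finsupp.equivFunOnFinite.symm fun i => ((p.1 i : ℕ))) (1 : k) : R) • (p.2 : M)))
    with hs
  have key : ∀ (y : M), y ∈ f (t + 1) → y ∈ S → ∀ r : R, r • y ∈ Submodule.span k s := by
    intro y hyP hyS r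
    have : r • y = ∑ μ ∈ r.support, (monomial μ (coeff μ r) : R) • y := by
      conv_lhs => rw [as_sum r]
      rw [Finset.sum_smul]
    rw [this]
    refine Submodule.sum_mem _ fun μ hμ => ?_
    by_cases hdeg : ∀ i, μ i ≤ t
    · have h1 : (monomial μ (coeff μ r) : R) • y
          = coeff μ r • (((monomial μ (1 : k) : R)) • y) := by
        rw [← smul_assoc, MvPolynomial.smul_eq_C_mul, C_mul_monomial, mul_one]
      rw [h1]
      refine Submodule.smul_mem _ _ (Submodule.subset_span ?_)
      refine ⟨⟨fun i => ⟨μ i, Nat.lt_succ_of_le (hdeg i)⟩, ⟨y, hyS⟩⟩, ?_⟩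
      simp only []
      congr 1
      congr 1
      exact congrArg _ (Finsupp.equivFunOnFinite_symm_coe μ)
    · push_neg at hdeg
      obtain ⟨i, hi⟩ := hdeg
      have hisupp : i ∈ μ.support := Finsupp.mem_support_iff.mpr (by omega)
      have hmem : (monomial μ (coeff μ r) : R) ∈ m ^ (t + 1) :=
        monomial_mem_pow μ _ (le_trans hi (Finset.single_le_sum (fun j _ => Nat.zero_le _) hisupp))
      have h0 := (Submodule.mem_torsionBySet_iff _ y).mp hyP ⟨_, hmem⟩
      rw [Subtype.coe_mk] at h0
      rw [h0]
      exact Submodule.zero_mem _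
  have stab : ∀ (r : R), ∀ x ∈ Submodule.span k s, r • x ∈ Submodule.span k s := by
    intro r x hx
    induction hx using Submodule.span_induction with
    | mem x hxs =>
      obtain ⟨⟨g, y⟩, rfl⟩ := hxs
      rw [← mul_smul]
      exact key y (hS ▸ Submodule.subset_span y.2) y.2 _
    | zero => rw [smul_zero]; exact Submodule.zero_mem _
    | add x y _ _ hx hy => rw [smul_add]; exact Submodule.add_mem _ hx hy
    | smul c x _ hx => rw [smul_comm]; exact Submodule.smul_mem _ c hx
  set T' : Submodule R M :=
    { toAddSubmonoid := (Submodule.span k s).toAddSubmonoid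
      smul_mem' := fun r x hx => stab r x hx } with hT'
  have hPle : f (t + 1) ≤ T' := by
    rw [← hS]
    refine Submodule.span_le.mpr fun y hy => ?_
    have : y ∈ Submodule.span k s := by
      have := key y (hS ▸ Submodule.subset_span hy) hy 1
      rwa [one_smul] at this
    exact this
  haveI : FiniteDimensional k (Submodule.span k s) :=
    FiniteDimensional.span_of_finite k (Set.finite_range _)
  refine Submodule.finiteDimensional_of_le (S₂ := Submodule.span k s) ?_
  intro x hx
  exact hPle (hNle hx)
end

section
/- Let R = F₂[x₁,…,xₙ] and φ : R → R the F₂-algebra homomorphism with φ(xᵢ) = xᵢ + xᵢ². If I is a nonzero homogeneous ideal of R with φ(I) ⊆ I, then I contains a (finite, possibly empty only if I = R) product of nonzero homogeneous degree-one polynomials; in particular, some product of nonzero F₂-linear forms lies in I. -/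
open MvPolynomial Finset

namespace Serre6

noncomputable section

variable {n : ℕ}

abbrev R2 (n : ℕ) := MvPolynomial (Fin n) (ZMod 2)

def SQ (n : ℕ) : R2 n →ₐ[ZMod 2] R2 n := aeval (fun i => X i + X i ^ 2)

lemma comp_mul_homog {t : ℕ} {a : R2 n} (ha : a.IsHomogeneous t) (h : R2 n) (k : ℕ) :
    homogeneousComponent (t + k) (a * h) = a * homogeneousComponent k h := by
  conv_lhs => rw [← sum_homogeneousComponent h, Finset.mul_sum, map_sum]
  have h1 : ∀ i ∈ Finset.range (h.totalDegree + 1),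
      homogeneousComponent (t + k) (a * homogeneousComponent i h)
      = if i = k then a * homogeneousComponent i h else 0 := by
    intro i _
    rw [homogeneousComponent_of_mem ((mem_homogeneousSubmodule _ _).2
      (ha.mul (homogeneousComponent_isHomogeneous i h)))]
    rcases eq_or_ne i k with rfl | hik
    · simp
    · rw [if_neg (by omega), if_neg hik]
  rw [Finset.sum_congr rfl h1, Finset.sum_ite_eq' (Finset.range _) k]
  by_cases hk : k ∈ Finset.range (h.totalDegree + 1)
  · simp [hk]
  · rw [if_neg hk]
    have : homogeneousComponent k h = 0 := by
      apply homogeneousComponent_eq_zero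
      simpa using Nat.lt_of_succ_le (not_lt.1 (fun hlt => hk (Finset.mem_range.2 hlt)))
    rw [this, mul_zero]

lemma comp_mul_homog_lt {t j : ℕ} {a : R2 n} (ha : a.IsHomogeneous t) (h : R2 n) (hj : j < t) :
    homogeneousComponent j (a * h) = 0 := by
  conv_lhs => rw [← sum_homogeneousComponent h, Finset.mul_sum, map_sum]
  apply Finset.sum_eq_zero
  intro i _
  rw [homogeneousComponent_of_mem ((mem_homogeneousSubmodule _ _).2
    (ha.mul (homogeneousComponent_isHomogeneous i h)))]
  rw [if_neg (by omega)]

end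

end Serre6

namespace Serre6

noncomputable section

variable {n : ℕ}

lemma degree_of_mem_support {e : ℕ} {g : R2 n} (hg : g.IsHomogeneous e)
    {d : Fin n →₀ ℕ} (hd : d ∈ g.support) : d.degree = e := by
  rw [Finsupp.degree_eq_weight_one]
  exact hg (MvPolynomial.mem_support_iff.1 hd)

lemma SQ_monomial (d : Fin n →₀ ℕ) (c : ZMod 2) :
    SQ n (monomial d c) = monomial d c * d.prod (fun i k => (1 + X i) ^ k) := by
  rw [SQ, aeval_monomial, monomial_eq, algebraMap_eq, mul_assoc]
  congr 1
  rw [Finsupp.prod, Finsupp.prod, Finsupp.prod, ← Finset.prod_mul_distrib]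
  apply Finset.prod_congr rfl
  intro i _
  rw [← mul_pow]
  congr 1
  ring

lemma td_aux (d : Fin n →₀ ℕ) :
    (d.prod fun i k => ((1 : R2 n) + X i) ^ k).totalDegree ≤ d.degree := by
  rw [Finsupp.prod, Finsupp.degree]
  refine le_trans (totalDegree_finset_prod _ _) (Finset.sum_le_sum ?_)
  intro i _
  refine le_trans (totalDegree_pow _ _) ?_
  have h1 : ((1 : R2 n) + X i).totalDegree ≤ 1 := by
    refine le_trans (totalDegree_add _ _) ?_
    simp [totalDegree_one, totalDegree_X]
  calc d i * ((1 : R2 n) + X i).totalDegree ≤ d i * 1 := Nat.mul_le_mul_left _ h1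
  _ = d i := mul_one _

lemma comp_SQ_eq_zero {e : ℕ} {g : R2 n} (hg : g.IsHomogeneous e) {m : ℕ}
    (hm : m < e ∨ 2 * e < m) : homogeneousComponent m (SQ n g) = 0 := by
  conv_lhs => rw [g.as_sum, map_sum, map_sum]
  apply Finset.sum_eq_zero
  intro d hd
  have hdeg : d.degree = e := degree_of_mem_support hg hd
  rw [SQ_monomial]
  rcases hm with hm | hm
  · exact comp_mul_homog_lt (isHomogeneous_monomial _ hdeg) _ hm
  · have hme : m = e + (m - e) := by omega
    rw [hme, comp_mul_homog (isHomogeneous_monomial _ hdeg)]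
    rw [homogeneousComponent_eq_zero _ _ (lt_of_le_of_lt (td_aux d) (by omega)), mul_zero]

lemma comp_mem_span {S : Set (R2 n)} (hS : ∀ f ∈ S, ∃ d, f.IsHomogeneous d)
    {p : R2 n} (hp : p ∈ Ideal.span S) (m : ℕ) :
    homogeneousComponent m p ∈ Ideal.span S := by
  refine Submodule.span_induction
    (p := fun x _ => ∀ m, homogeneousComponent m x ∈ Ideal.span S) ?_ ?_ ?_ ?_ hp m
  · intro x hx m
    obtain ⟨d, hd⟩ := hS x hx
    rw [homogeneousComponent_of_mem ((mem_homogeneousSubmodule _ _).2 hd)]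
    split
    · exact Ideal.subset_span hx
    · exact Ideal.zero_mem _
  · intro m
    rw [map_zero]
    exact Ideal.zero_mem _
  · intro x y _ _ hx hy m
    rw [map_add]
    exact Ideal.add_mem _ (hx m) (hy m)
  · intro r x _ hx m
    rw [smul_eq_mul]
    conv_rhs => rw [← sum_homogeneousComponent x, Finset.mul_sum, map_sum]
    apply Ideal.sum_mem
    intro i _
    rw [mul_comm r]
    rcases lt_or_ge m i with hmi | hmi
    · rw [comp_mul_homog_lt (homogeneousComponent_isHomogeneous i x) _ hmi]
      exact Ideal.zero_mem _
    · have h2 : m = i + (m - i) := by omega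
      rw [h2, comp_mul_homog (homogeneousComponent_isHomogeneous i x)]
      exact Ideal.mul_mem_right _ _ (hx i)

lemma comp_mem {I : Ideal (R2 n)}
    (hhom : I = Ideal.span {f | f ∈ I ∧ ∃ d, f.IsHomogeneous d})
    {p : R2 n} (hp : p ∈ I) (m : ℕ) : homogeneousComponent m p ∈ I := by
  conv_lhs => rw [hhom]
  rw [hhom] at hp
  exact comp_mem_span (fun f hf => hf.2) hp m

lemma degree_one_single (d : Fin n →₀ ℕ) (hd : d.degree = 1) :
    ∃ i, d = Finsupp.single i 1 := by
  have hne : d.support.Nonempty := by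
    rcases Finset.eq_empty_or_nonempty d.support with h | h
    · exfalso
      rw [Finsupp.degree_apply, h, Finset.sum_empty] at hd
      exact one_ne_zero hd.symm
    · exact h
  obtain ⟨i, hi⟩ := hne
  have hle : d i ≤ 1 := by
    rw [← hd, Finsupp.degree_apply]
    exact Finset.single_le_sum (fun j _ => Nat.zero_le _) hi
  have hge : 1 ≤ d i := Nat.one_le_iff_ne_zero.2 (Finsupp.mem_support_iff.1 hi)
  refine ⟨i, ?_⟩
  ext j
  rcases eq_or_ne j i with rfl | hj
  · simp; omega
  · rw [Finsupp.single_apply, if_neg (Ne.symm hj)]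
    by_contra hdj
    have hjmem : j ∈ d.support := Finsupp.mem_support_iff.2 hdj
    have : d i + d j ≤ d.degree := by
      rw [Finsupp.degree_apply, ← Finset.sum_pair hj.symm]
      exact Finset.sum_le_sum_of_subset (by
        intro x hx
        simp only [Finset.mem_insert, Finset.mem_singleton] at hx
        rcases hx with rfl | rfl
        · exact hi
        · exact hjmem)
    omega

lemma linear_SQ {v : R2 n} (hv : v.IsHomogeneous 1) : SQ n v = v + v ^ 2 := by
  conv_lhs => rw [v.as_sum, map_sum]
  have key : ∀ d ∈ v.support, SQ n (monomial d (coeff d v))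
      = monomial d (coeff d v) + monomial d (coeff d v) ^ 2 := by
    intro d hd
    obtain ⟨i, rfl⟩ := degree_one_single d (degree_of_mem_support hv hd)
    have hc : coeff (Finsupp.single i 1) v = 1 := by
      have h0 := MvPolynomial.mem_support_iff.1 hd
      revert h0
      generalize coeff (Finsupp.single i 1) v = c
      revert c
      decide
    rw [hc, ← C_mul_X_eq_monomial, C_1, one_mul]
    rw [SQ]
    simp [aeval_X]
  rw [Finset.sum_congr rfl key, Finset.sum_add_distrib]
  congr 1
  · exact v.as_sum.symm
  · rw [← sum_pow_char]
    congr 1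
    exact v.as_sum.symm

end

end Serre6

namespace Serre6

noncomputable section

variable {n : ℕ}

def colon1 (I : Ideal (R2 n)) (u : R2 n) : Ideal (R2 n) where
  carrier := {g | u * g ∈ I}
  add_mem' := by
    intro a b ha hb
    simp only [Set.mem_setOf_eq, mul_add] at *
    exact Ideal.add_mem _ ha hb
  zero_mem' := by simp
  smul_mem' := by
    intro c g hg
    simp only [smul_eq_mul, Set.mem_setOf_eq] at *
    rw [mul_comm c g, ← mul_assoc]
    exact Ideal.mul_mem_right _ _ hg

lemma mem_colon1 {I : Ideal (R2 n)} {u g : R2 n} : g ∈ colon1 I u ↔ u * g ∈ I := Iff.rfl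

lemma le_colon1 {I : Ideal (R2 n)} {u : R2 n} : I ≤ colon1 I u := by
  intro g hg
  exact Ideal.mul_mem_left _ _ hg

lemma span_homog_of_comp_closed (J : Ideal (R2 n))
    (h : ∀ g ∈ J, ∀ m, homogeneousComponent m g ∈ J) :
    J = Ideal.span {f | f ∈ J ∧ ∃ d, f.IsHomogeneous d} := by
  apply le_antisymm
  · intro g hg
    rw [← sum_homogeneousComponent g]
    exact Ideal.sum_mem _ (fun i _ =>
      Ideal.subset_span ⟨h g hg i, i, homogeneousComponent_isHomogeneous i g⟩)
  · rw [Ideal.span_le]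
    intro f hf
    exact hf.1

lemma colon1_comp_closed {I : Ideal (R2 n)}
    (hhom : I = Ideal.span {f | f ∈ I ∧ ∃ d, f.IsHomogeneous d})
    {u : R2 n} (hu : u.IsHomogeneous 1) :
    ∀ g ∈ colon1 I u, ∀ m, homogeneousComponent m g ∈ colon1 I u := by
  intro g hg m
  rw [mem_colon1, ← comp_mul_homog hu]
  exact comp_mem hhom (mem_colon1.1 hg) _

lemma colon1_SQ_stable {I : Ideal (R2 n)}
    (hhom : I = Ideal.span {f | f ∈ I ∧ ∃ d, f.IsHomogeneous d})
    (hφ : ∀ f ∈ I, SQ n f ∈ I)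
    {u : R2 n} (hu : u.IsHomogeneous 1) :
    ∀ g ∈ colon1 I u, SQ n g ∈ colon1 I u := by
  -- first the homogeneous case
  have homog_case : ∀ e : ℕ, ∀ h : R2 n, h.IsHomogeneous e → h ∈ colon1 I u →
      SQ n h ∈ colon1 I u := by
    intro e h hhe hmem
    have hIuh : u * h ∈ I := mem_colon1.1 hmem
    have hsq : (u + u ^ 2) * SQ n h ∈ I := by
      have := hφ _ hIuh
      rw [map_mul, linear_SQ hu] at this
      exact this
    -- key claim by induction on k
    have key : ∀ k : ℕ, u * homogeneousComponent (e + k) (SQ n h) ∈ I := by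
      intro k
      induction k with
      | zero =>
        have hcomp := comp_mem hhom hsq (e + 1)
        have hexp : (u + u ^ 2) * SQ n h = u * SQ n h + u * u * SQ n h := by ring
        rw [hexp, map_add] at hcomp
        have h1 : homogeneousComponent (e + 1) (u * SQ n h)
            = u * homogeneousComponent e (SQ n h) := by
          have : e + 1 = 1 + e := by omega
          rw [this, comp_mul_homog hu]
        have h2 : homogeneousComponent (e + 1) (u * u * SQ n h) = 0 := by
          rcases Nat.eq_zero_or_pos e with rfl | he
          · exact comp_mul_homog_lt (hu.mul hu) _ (by omega)
          · have : e + 1 = 2 + (e - 1) := by omega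
            rw [this, comp_mul_homog (hu.mul hu)]
            rw [comp_SQ_eq_zero hhe (Or.inl (by omega)), mul_zero]
        rw [h1, h2, add_zero] at hcomp
        simpa using hcomp
      | succ k ih =>
        have hcomp := comp_mem hhom hsq (e + k + 2)
        have hexp : (u + u ^ 2) * SQ n h = u * SQ n h + u * u * SQ n h := by ring
        rw [hexp, map_add] at hcomp
        have h1 : homogeneousComponent (e + k + 2) (u * SQ n h)
            = u * homogeneousComponent (e + (k + 1)) (SQ n h) := by
          have : e + k + 2 = 1 + (e + (k + 1)) := by omega
          rw [this, comp_mul_homog hu]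
        have h2 : homogeneousComponent (e + k + 2) (u * u * SQ n h)
            = u * (u * homogeneousComponent (e + k) (SQ n h)) := by
          have h3 : e + k + 2 = 2 + (e + k) := by omega
          rw [h3, comp_mul_homog (hu.mul hu)]
          ring
        rw [h1, h2] at hcomp
        have hmem2 : u * (u * homogeneousComponent (e + k) (SQ n h)) ∈ I :=
          Ideal.mul_mem_left _ _ ih
        exact (Ideal.add_mem_iff_left _ hmem2).1 hcomp
    rw [mem_colon1]
    conv_rhs => rw [← sum_homogeneousComponent (SQ n h), Finset.mul_sum]
    apply Ideal.sum_mem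
    intro m _
    rcases lt_or_ge m e with hme | hme
    · rw [comp_SQ_eq_zero hhe (Or.inl hme), mul_zero]
      exact Ideal.zero_mem _
    · have : m = e + (m - e) := by omega
      rw [this]
      exact key _
  -- general case
  intro g hg
  have hdecomp : SQ n g = ∑ i ∈ Finset.range (g.totalDegree + 1),
      SQ n (homogeneousComponent i g) := by
    conv_lhs => rw [← sum_homogeneousComponent g, map_sum]
  rw [hdecomp]
  apply Ideal.sum_mem
  intro i _
  exact homog_case i _ (homogeneousComponent_isHomogeneous i g)
    (colon1_comp_closed hhom hu g hg i)

lemma SQ_multiset_prod {s : Multiset (R2 n)} (hs : ∀ v ∈ s, v.IsHomogeneous 1) :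
    SQ n s.prod = s.prod * (s.map (fun v => 1 + v)).prod := by
  induction s using Multiset.induction with
  | empty => simp
  | cons v t ih =>
    rw [Multiset.prod_cons, map_mul, linear_SQ (hs v (Multiset.mem_cons_self _ _)),
      ih (fun w hw => hs w (Multiset.mem_cons_of_mem hw)), Multiset.map_cons,
      Multiset.prod_cons]
    ring

end

end Serre6

namespace Serre6

noncomputable section

variable {n : ℕ}

lemma Q_identity (u : R2 n) {s : Multiset (R2 n)} (hs : ∀ v ∈ s, v.IsHomogeneous 1) :
    ((s.map (fun v => 1 + v)).prod).totalDegree ≤ Multiset.card s ∧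
    ∑ k ∈ Finset.range (Multiset.card s + 1),
      u ^ (Multiset.card s - k) *
        homogeneousComponent k (s.map (fun v => 1 + v)).prod
      = (s.map (fun v => u + v)).prod := by
  induction s using Multiset.induction with
  | empty =>
    refine ⟨by simp, ?_⟩
    simp [homogeneousComponent_zero]
  | cons v t ih =>
    obtain ⟨ihtd, ihsum⟩ := ih (fun w hw => hs w (Multiset.mem_cons_of_mem hw))
    have hv : v.IsHomogeneous 1 := hs v (Multiset.mem_cons_self _ _)
    set D := Multiset.card t with hD
    set Q := (t.map (fun v => 1 + v)).prod with hQ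
    have hcard : Multiset.card (v ::ₘ t) = D + 1 := by simp [hD]
    have hprod : ((v ::ₘ t).map (fun w => 1 + w)).prod = Q + v * Q := by
      rw [Multiset.map_cons, Multiset.prod_cons, ← hQ]
      ring
    have htd1 : ((1 : R2 n) + v).totalDegree ≤ 1 := by
      refine le_trans (totalDegree_add _ _) ?_
      simp only [totalDegree_one]
      simp [hv.totalDegree_le]
    constructor
    · rw [hprod, hcard]
      have : (Q + v * Q : R2 n) = (1 + v) * Q := by ring
      rw [this]
      refine le_trans (totalDegree_mul _ _) ?_
      have := ihtd
      omega
    · rw [hcard, hprod]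
      have hsplit : ∀ k, homogeneousComponent k (Q + v * Q)
          = homogeneousComponent k Q + homogeneousComponent k (v * Q) :=
        fun k => map_add _ _ _
      simp_rw [hsplit, mul_add]
      rw [Finset.sum_add_distrib]
      have hSa : ∑ k ∈ Finset.range (D + 1 + 1), u ^ (D + 1 - k) * homogeneousComponent k Q
          = u * ∑ k ∈ Finset.range (D + 1), u ^ (D - k) * homogeneousComponent k Q := by
        rw [Finset.sum_range_succ]
        rw [homogeneousComponent_eq_zero _ _ (lt_of_le_of_lt ihtd (Nat.lt_succ_self _)),
          mul_zero, add_zero, Finset.mul_sum]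
        apply Finset.sum_congr rfl
        intro k hk
        have hk' : k ≤ D := by
          have := Finset.mem_range.1 hk
          omega
        have h1 : D + 1 - k = (D - k) + 1 := by omega
        rw [h1, pow_succ']
        ring
      have hSb : ∑ k ∈ Finset.range (D + 1 + 1), u ^ (D + 1 - k) * homogeneousComponent k (v * Q)
          = v * ∑ k ∈ Finset.range (D + 1), u ^ (D - k) * homogeneousComponent k Q := by
        rw [Finset.sum_range_succ']
        have h0 : homogeneousComponent 0 (v * Q) = 0 :=
          comp_mul_homog_lt hv _ (by omega)
        rw [h0, mul_zero, add_zero, Finset.mul_sum]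
        apply Finset.sum_congr rfl
        intro k hk
        have h1 : homogeneousComponent (k + 1) (v * Q) = v * homogeneousComponent k Q := by
          have : k + 1 = 1 + k := by omega
          rw [this, comp_mul_homog hv]
        have h2 : D + 1 - (k + 1) = D - k := by omega
        rw [h1, h2]
        ring
      rw [hSa, hSb, ihsum, Multiset.map_cons, Multiset.prod_cons]
      ring

end

end Serre6

namespace Serre6

noncomputable section

variable {n : ℕ}

def proj (n : ℕ) : R2 (n + 1) →ₐ[ZMod 2] R2 n :=
  aeval (Fin.cases 0 X)

def incl (n : ℕ) : R2 n →ₐ[ZMod 2] R2 (n + 1) :=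
  rename Fin.succ

lemma proj_incl (p : R2 n) : proj n (incl n p) = p := by
  rw [proj, incl, aeval_rename]
  have : (Fin.cases 0 X ∘ Fin.succ : Fin n → R2 n) = X := by
    funext i
    simp
  rw [this, aeval_X_left_apply]

lemma proj_surjective : Function.Surjective (proj n) :=
  fun p => ⟨incl n p, proj_incl p⟩

lemma proj_SQ (f : R2 (n + 1)) : proj n (SQ (n + 1) f) = SQ n (proj n f) := by
  have : (proj n).comp (SQ (n + 1)) = (SQ n).comp (proj n) := by
    apply MvPolynomial.algHom_ext
    intro i
    induction i using Fin.cases with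
    | zero => simp [SQ, proj]
    | succ j => simp [SQ, proj]
  exact DFunLike.congr_fun this f

lemma proj_monomial_ne (d : Fin (n + 1) →₀ ℕ) (c : ZMod 2) (hd : d 0 ≠ 0) :
    proj n (monomial d c) = 0 := by
  rw [proj, aeval_monomial, Finsupp.prod]
  have h0 : (0 : Fin (n + 1)) ∈ d.support := Finsupp.mem_support_iff.2 hd
  rw [Finset.prod_eq_zero h0 (by simp [zero_pow hd]), mul_zero]

lemma proj_monomial_eq (d : Fin (n + 1) →₀ ℕ) (c : ZMod 2) (hd : d 0 = 0) :
    ∃ d' : Fin n →₀ ℕ, d'.degree = d.degree ∧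
      proj n (monomial d c) = monomial d' c := by
  set d' : Fin n →₀ ℕ := Finsupp.comapDomain Fin.succ d
    ((Fin.succ_injective n).injOn) with hd'
  have hmap : Finsupp.mapDomain Fin.succ d' = d := by
    ext i
    induction i using Fin.cases with
    | zero =>
      rw [Finsupp.mapDomain_notin_range _ _ (by simp [Fin.succ_ne_zero])]
      exact hd.symm
    | succ j =>
      rw [Finsupp.mapDomain_apply (Fin.succ_injective n)]
      simp [hd']
  refine ⟨d', ?_, ?_⟩
  · have key : (Finsupp.mapDomain Fin.succ d').degree = d'.degree := by
      have h1 : (Finsupp.mapDomain Fin.succ d').degree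
          = (Finsupp.mapDomain Fin.succ d').sum (fun (_ : Fin (n+1)) (m : ℕ) => m) := rfl
      have h2 : d'.degree = d'.sum (fun (_ : Fin n) (m : ℕ) => m) := rfl
      rw [h1, h2]
      exact Finsupp.sum_mapDomain_index (fun _ => rfl) (fun _ _ _ => rfl)
    rw [← hmap, key]
  · rw [← hmap, ← rename_monomial]
    exact proj_incl _

lemma proj_isHomogeneous {p : R2 (n + 1)} {d : ℕ} (hp : p.IsHomogeneous d) :
    (proj n p).IsHomogeneous d := by
  rw [← mem_homogeneousSubmodule]
  conv_rhs => rw [p.as_sum, map_sum]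
  apply Submodule.sum_mem
  intro m hm
  rcases eq_or_ne (m 0) 0 with h0 | h0
  · obtain ⟨d', hdeg, heq⟩ := proj_monomial_eq m _ h0
    rw [heq, mem_homogeneousSubmodule]
    exact isHomogeneous_monomial _ (by rw [hdeg]; exact degree_of_mem_support hp hm)
  · rw [proj_monomial_ne m _ h0]
    exact Submodule.zero_mem _

lemma X_dvd_of_proj_eq_zero {f : R2 (n + 1)} (hf : proj n f = 0) :
    ∃ g : R2 (n + 1), f = X 0 * g := by
  set E := MvPolynomial.finSuccEquiv (ZMod 2) n with hE
  have hbridge : ∀ q : R2 (n + 1), proj n q = Polynomial.eval 0 (E q) := by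
    intro q
    have : ((Polynomial.evalRingHom (0 : R2 n)).comp (E : R2 (n+1) →+* Polynomial (R2 n)))
        = (proj n : R2 (n+1) →+* R2 n) := by
      apply MvPolynomial.ringHom_ext
      · intro c
        simp only [RingHom.coe_comp, Function.comp_apply, RingHom.coe_coe]
        rw [finSuccEquiv_apply, eval₂Hom_C]
        simp [proj]
      · intro i
        induction i using Fin.cases with
        | zero => simp [hE, finSuccEquiv_X_zero, proj]
        | succ j => simp [hE, finSuccEquiv_X_succ, proj]
    exact (DFunLike.congr_fun this q).symm
  rw [hbridge] at hf
  have hdvd : Polynomial.X ∣ E f := by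
    rw [Polynomial.X_dvd_iff, Polynomial.coeff_zero_eq_eval_zero]
    exact hf
  obtain ⟨q, hq⟩ := hdvd
  refine ⟨E.symm q, ?_⟩
  have : f = E.symm (Polynomial.X * q) := by
    rw [← hq]
    exact (E.symm_apply_apply f).symm
  rw [this, map_mul]
  congr 1
  have : E (X 0) = Polynomial.X := finSuccEquiv_X_zero
  rw [← this, E.symm_apply_apply]

lemma constantCoeff_proj (f : R2 (n + 1)) :
    constantCoeff (proj n f) = constantCoeff f := by
  have : (constantCoeff.comp (proj n : R2 (n+1) →+* R2 n))
      = (constantCoeff : R2 (n+1) →+* ZMod 2) := by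
    apply MvPolynomial.ringHom_ext
    · intro c
      simp [proj]
    · intro i
      induction i using Fin.cases with
      | zero => simp [proj]
      | succ j => simp [proj]
  exact DFunLike.congr_fun this f

end

end Serre6

namespace Serre6

noncomputable section

lemma main_zero (I : Ideal (R2 0)) (hI : I ≠ ⊥) : (1 : R2 0) ∈ I := by
  obtain ⟨f, hfI, hf0⟩ := Submodule.exists_mem_ne_zero_of_ne_bot hI
  set e := MvPolynomial.isEmptyAlgEquiv (ZMod 2) (Fin 0) with he
  have hef : e f ≠ 0 := by
    intro h
    exact hf0 (by simpa using e.injective (h.trans (map_zero e).symm))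
  have hef1 : e f = 1 := by
    revert hef
    generalize e f = c
    revert c
    decide
  have : f = 1 := by
    have := congrArg e.symm hef1
    rwa [e.symm_apply_apply, map_one] at this
  rwa [this] at hfI

lemma prod_linear_homog {n : ℕ} {s : Multiset (R2 n)} (hs : ∀ v ∈ s, v.IsHomogeneous 1) :
    s.prod.IsHomogeneous (Multiset.card s) := by
  induction s using Multiset.induction with
  | empty => simpa using isHomogeneous_one _ _
  | cons v t ih =>
    rw [Multiset.prod_cons, Multiset.card_cons]
    have := (hs v (Multiset.mem_cons_self _ _)).mul
      (ih (fun w hw => hs w (Multiset.mem_cons_of_mem hw)))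
    simpa [add_comm] using this

lemma proj_comp {n : ℕ} (h : R2 (n + 1)) (m : ℕ) :
    homogeneousComponent m (proj n h) = proj n (homogeneousComponent m h) := by
  have hh : proj n h = ∑ k ∈ Finset.range (h.totalDegree + 1),
      proj n (homogeneousComponent k h) := by
    conv_lhs => rw [← sum_homogeneousComponent h, map_sum]
  rw [hh, map_sum]
  rw [Finset.sum_congr rfl (fun k _ => homogeneousComponent_of_mem
    ((mem_homogeneousSubmodule _ _).2 (proj_isHomogeneous
      (homogeneousComponent_isHomogeneous k h))))]
  rw [Finset.sum_ite_eq (Finset.range _) m]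
  by_cases hm : m ∈ Finset.range (h.totalDegree + 1)
  · rw [if_pos hm]
  · rw [if_neg hm]
    have : homogeneousComponent m h = 0 := by
      apply homogeneousComponent_eq_zero
      simp only [Finset.mem_range, not_lt] at hm
      omega
    rw [this, map_zero]

theorem main : ∀ (n : ℕ) (I : Ideal (R2 n)), I ≠ ⊥ →
    I = Ideal.span {f | f ∈ I ∧ ∃ d, f.IsHomogeneous d} →
    (∀ f ∈ I, SQ n f ∈ I) →
    ∃ s : Multiset (R2 n), (∀ f ∈ s, f ≠ 0 ∧ f.IsHomogeneous 1) ∧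
      s.prod ∈ I ∧ (s = 0 → I = ⊤) := by
  intro n
  induction n with
  | zero =>
    intro I hI _ _
    exact ⟨0, by simp, by simpa using main_zero I hI,
      fun _ => (Ideal.eq_top_iff_one I).2 (main_zero I hI)⟩
  | succ n ih =>
    classical
    have wf : WellFounded ((· > ·) : Ideal (R2 (n + 1)) → Ideal (R2 (n + 1)) → Prop) :=
      IsWellFounded.wf
    intro I
    refine WellFounded.induction (C := fun J : Ideal (R2 (n + 1)) =>
      J ≠ ⊥ → J = Ideal.span {f | f ∈ J ∧ ∃ d, f.IsHomogeneous d} →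
      (∀ f ∈ J, SQ (n + 1) f ∈ J) →
      ∃ s : Multiset (R2 (n + 1)), (∀ f ∈ s, f ≠ 0 ∧ f.IsHomogeneous 1) ∧
        s.prod ∈ J ∧ (s = 0 → J = ⊤)) wf I ?_
    clear I
    intro I IH hI hhom hφ
    by_cases h1I : (1 : R2 (n + 1)) ∈ I
    · exact ⟨0, by simp, by simpa using h1I, fun _ => (Ideal.eq_top_iff_one I).2 h1I⟩
    by_cases hexist : ∃ u : R2 (n + 1), u ≠ 0 ∧ u.IsHomogeneous 1 ∧ colon1 I u ≠ I
    · obtain ⟨u, hu0, hu1, hune⟩ := hexist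
      have hgt : colon1 I u > I := lt_of_le_of_ne le_colon1 (Ne.symm hune)
      have hbot : colon1 I u ≠ ⊥ := by
        intro hb
        exact hI (le_bot_iff.1 (hb ▸ le_colon1))
      obtain ⟨s', hs'1, hs'2, hs'3⟩ := IH (colon1 I u) hgt hbot
        (span_homog_of_comp_closed _ (colon1_comp_closed hhom hu1))
        (colon1_SQ_stable hhom hφ hu1)
      rcases eq_or_ne s' 0 with rfl | hs'ne
      · have htop := hs'3 rfl
        have huI : u ∈ I := by
          have h1 : (1 : R2 (n + 1)) ∈ colon1 I u := htop ▸ Submodule.mem_top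
          simpa using mem_colon1.1 h1
        refine ⟨{u}, ?_, by simpa using huI, by simp⟩
        intro f hf
        rw [Multiset.mem_singleton] at hf
        subst hf
        exact ⟨hu0, hu1⟩
      · refine ⟨u ::ₘ s', ?_, ?_, by simp⟩
        · intro f hf
          rcases Multiset.mem_cons.1 hf with rfl | hf
          · exact ⟨hu0, hu1⟩
          · exact hs'1 f hf
        · rw [Multiset.prod_cons]
          exact mem_colon1.1 hs'2
    · exfalso
      push_neg at hexist
      have hcolon : ∀ u : R2 (n + 1), u ≠ 0 → u.IsHomogeneous 1 →
          ∀ g, u * g ∈ I → g ∈ I := by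
        intro u h0 h1 g hg
        rw [← hexist u h0 h1]
        exact hg
      have hpeel : ∀ t : Multiset (R2 (n + 1)), (∀ w ∈ t, w ≠ 0 ∧ w.IsHomogeneous 1) →
          ∀ x, t.prod * x ∈ I → x ∈ I := by
        intro t
        induction t using Multiset.induction with
        | empty => intro _ x hx; simpa using hx
        | cons w t iht =>
          intro hwt x hx
          rw [Multiset.prod_cons, mul_assoc] at hx
          exact iht (fun z hz => hwt z (Multiset.mem_cons_of_mem hz)) x
            (hcolon w (hwt w (Multiset.mem_cons_self _ _)).1
              (hwt w (Multiset.mem_cons_self _ _)).2 _ hx)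
      have hnoprod : ∀ t : Multiset (R2 (n + 1)), (∀ w ∈ t, w ≠ 0 ∧ w.IsHomogeneous 1) →
          t.prod ∉ I := by
        intro t ht hmem
        have h1 : (1 : R2 (n + 1)) ∈ I := by
          have := hpeel t ht 1 (by simpa using hmem)
          exact this
        exact h1I h1
      -- minimal degree element
      have hP : ∃ d : ℕ, ∃ f, f ∈ I ∧ f ≠ 0 ∧ f.IsHomogeneous d := by
        by_contra hc
        push_neg at hc
        apply hI
        rw [hhom, Ideal.span_eq_bot]
        rintro f ⟨hfI, d, hfd⟩
        by_contra hf0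
        exact (hc d f hfI hf0) hfd
      set d₀ := Nat.find hP with hd₀
      obtain ⟨f₀, hf₀I, hf₀0, hf₀h⟩ := Nat.find_spec hP
      have hd₀pos : 0 < d₀ := by
        by_contra hle
        have h0 : d₀ = 0 := by omega
        apply h1I
        rw [← hd₀] at hf₀h
        rw [h0] at hf₀h
        have hcomp0 : homogeneousComponent 0 f₀ = f₀ := by
          rw [homogeneousComponent_of_mem ((mem_homogeneousSubmodule _ _).2 hf₀h)]
          simp
        have hC : f₀ = C (coeff 0 f₀) := hcomp0.symm.trans (homogeneousComponent_zero f₀)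
        have hc1 : coeff 0 f₀ = 1 := by
          have hne : coeff 0 f₀ ≠ 0 := by
            intro hz
            apply hf₀0
            rw [hC, hz, map_zero]
          revert hne
          generalize coeff 0 f₀ = c
          revert c
          decide
        have : f₀ = 1 := by rw [hC, hc1, C_1]
        rwa [← this]
      rw [← hd₀] at hf₀h
      -- the image ideal in n variables
      set Ib : Ideal (R2 n) := Ideal.map (proj n) I with hIb
      have hmem_Ib : ∀ y, y ∈ Ib ↔ ∃ x, x ∈ I ∧ proj n x = y := by
        intro y
        rw [hIb]
        exact Ideal.mem_map_iff_of_surjective _ proj_surjective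
      have hπf₀ : proj n f₀ ≠ 0 := by
        intro hz
        obtain ⟨g', hg'⟩ := X_dvd_of_proj_eq_zero hz
        set g₁ := homogeneousComponent (d₀ - 1) g' with hg₁
        have hXg₁ : X 0 * g₁ = f₀ := by
          have h1 : homogeneousComponent d₀ f₀ = f₀ := by
            rw [homogeneousComponent_of_mem ((mem_homogeneousSubmodule _ _).2 hf₀h)]
            simp
          have hd1 : d₀ = 1 + (d₀ - 1) := by omega
          calc X 0 * g₁ = homogeneousComponent (1 + (d₀ - 1)) (X 0 * g') :=
                (comp_mul_homog (isHomogeneous_X _ _) g' (d₀ - 1)).symm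
          _ = homogeneousComponent d₀ f₀ := by rw [← hd1, ← hg']
          _ = f₀ := h1
        have hg₁I : g₁ ∈ I := hcolon (X 0) (X_ne_zero _) (isHomogeneous_X _ _) g₁
          (by rw [hXg₁]; exact hf₀I)
        have hmin : ¬ ∃ f, f ∈ I ∧ f ≠ 0 ∧ f.IsHomogeneous (d₀ - 1) :=
          Nat.find_min hP (by omega)
        exact hmin ⟨g₁, hg₁I, fun h => hf₀0 (by rw [← hXg₁, h, mul_zero]),
          homogeneousComponent_isHomogeneous _ _⟩
      have hIbbot : Ib ≠ ⊥ := by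
        intro hb
        apply hπf₀
        have hm : proj n f₀ ∈ Ib := Ideal.mem_map_of_mem _ hf₀I
        rwa [hb, Submodule.mem_bot] at hm
      have hIbcomp : ∀ g ∈ Ib, ∀ m, homogeneousComponent m g ∈ Ib := by
        intro g hg m
        obtain ⟨x, hxI, rfl⟩ := (hmem_Ib g).1 hg
        rw [proj_comp]
        exact Ideal.mem_map_of_mem _ (comp_mem hhom hxI m)
      have hIbhom := span_homog_of_comp_closed Ib hIbcomp
      have hIbφ : ∀ g ∈ Ib, SQ n g ∈ Ib := by
        intro g hg
        obtain ⟨x, hxI, rfl⟩ := (hmem_Ib g).1 hg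
        rw [← proj_SQ]
        exact Ideal.mem_map_of_mem _ (hφ x hxI)
      obtain ⟨sb, hsb1, hsb2, hsb3⟩ := ih Ib hIbbot hIbhom hIbφ
      rcases eq_or_ne sb 0 with rfl | hsbne
      · have htop := hsb3 rfl
        have h1b : (1 : R2 n) ∈ Ib := htop ▸ Submodule.mem_top
        obtain ⟨h, hhI, hπh⟩ := (hmem_Ib 1).1 h1b
        apply h1I
        have hcc : constantCoeff h = 1 := by
          rw [← constantCoeff_proj, hπh, map_one]
        have hc0 : homogeneousComponent 0 h ∈ I := comp_mem hhom hhI 0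
        rw [homogeneousComponent_zero] at hc0
        have hcoeff : coeff 0 h = 1 := hcc
        rwa [hcoeff, C_1] at hc0
      · set s : Multiset (R2 (n + 1)) := sb.map (incl n) with hs
        set D := Multiset.card sb with hDdef
        have hDpos : 0 < D := by
          rw [hDdef]
          exact Multiset.card_pos.2 hsbne
        have hs_homog : ∀ v ∈ s, v.IsHomogeneous 1 := by
          intro v hv
          obtain ⟨vb, hvb, rfl⟩ := Multiset.mem_map.1 hv
          exact ((hsb1 vb hvb).2).rename_isHomogeneous
        have hs_proj : ∀ v ∈ s, proj n v ≠ 0 := by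
          intro v hv
          obtain ⟨vb, hvb, rfl⟩ := Multiset.mem_map.1 hv
          rw [proj_incl]
          exact (hsb1 vb hvb).1
        have hs_ne : ∀ v ∈ s, v ≠ 0 := fun v hv h0 => hs_proj v hv (by rw [h0, map_zero])
        have hcard_s : Multiset.card s = D := by rw [hs, Multiset.card_map]
        set P := s.prod with hPdef
        have hPhomog : P.IsHomogeneous D := hcard_s ▸ prod_linear_homog hs_homog
        have hπP : proj n P = sb.prod := by
          rw [hPdef, map_multiset_prod, hs, Multiset.map_map]
          have : sb.map (proj n ∘ incl n) = sb := by
            rw [show (proj n ∘ incl n : R2 n → R2 n) = id from funext proj_incl, Multiset.map_id]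
          rw [this]
        have hπPIb : proj n P ∈ Ib := by rw [hπP]; exact hsb2
        obtain ⟨h, hhI, hπh⟩ := (hmem_Ib _).1 hπPIb
        have hπsum : proj n (P + h) = 0 := by
          rw [map_add, hπh]
          exact CharTwo.add_self_eq_zero _
        obtain ⟨g', hg'⟩ := X_dvd_of_proj_eq_zero hπsum
        have hhPX : P + X 0 * g' = h := by
          rw [← hg', ← add_assoc, CharTwo.add_self_eq_zero, zero_add]
        set e := D - 1 with he
        have hD1 : D = 1 + e := by omega
        set g := homogeneousComponent e g' with hgdef
        have hg : g.IsHomogeneous e := homogeneousComponent_isHomogeneous _ _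
        set F := homogeneousComponent D h with hFdef
        have hFI : F ∈ I := comp_mem hhom hhI D
        have hFeq : F = P + X 0 * g := by
          rw [hFdef, ← hhPX, map_add]
          congr 1
          · rw [homogeneousComponent_of_mem ((mem_homogeneousSubmodule _ _).2 hPhomog)]
            simp
          · rw [hD1, comp_mul_homog (isHomogeneous_X _ _)]
        set u : R2 (n + 1) := X 0 with hu
        have hu1 : u.IsHomogeneous 1 := isHomogeneous_X _ _
        have hu0 : u ≠ 0 := X_ne_zero _
        set Q := (s.map (fun v => 1 + v)).prod with hQdef
        have hSQF : SQ (n + 1) F = P * Q + (u + u ^ 2) * SQ (n + 1) g := by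
          rw [hFeq, map_add, map_mul, SQ_multiset_prod hs_homog, linear_SQ hu1]
        set B := (1 + u) * SQ (n + 1) g + Q * g with hBdef
        have hA : u * B ∈ I := by
          have hAI : SQ (n + 1) F + Q * F ∈ I :=
            Ideal.add_mem _ (hφ F hFI) (Ideal.mul_mem_left _ _ hFI)
          have hAeq : SQ (n + 1) F + Q * F = u * B + (P * Q + P * Q) := by
            rw [hSQF, hFeq, hBdef]
            ring
          rwa [hAeq, CharTwo.add_self_eq_zero, add_zero] at hAI
        have hbk : ∀ k, homogeneousComponent (e + k) B ∈ I := by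
          intro k
          apply hcolon u hu0 hu1
          have h7 : u * homogeneousComponent (e + k) B
              = homogeneousComponent (e + k + 1) (u * B) := by
            have h3 : e + k + 1 = 1 + (e + k) := by omega
            rw [h3, comp_mul_homog hu1]
          rw [h7]
          exact comp_mem hhom hA _
        set W := (s.map (fun v => u + v)).prod with hWdef
        obtain ⟨hQtd, hQsum⟩ := Q_identity u hs_homog
        rw [hcard_s] at hQtd hQsum
        rw [← hQdef, ← hWdef] at hQsum
        have hT : ∑ k ∈ Finset.range (D + 1), u ^ (D - k) * homogeneousComponent (e + k) B
            = W * g := by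
          have hsplit : ∀ k, homogeneousComponent (e + k) B
              = homogeneousComponent (e + k) (SQ (n + 1) g)
                + homogeneousComponent (e + k) (u * SQ (n + 1) g)
                + homogeneousComponent (e + k) (Q * g) := by
            intro k
            have h8 : B = (SQ (n + 1) g + u * SQ (n + 1) g) + Q * g := by
              rw [hBdef]; ring
            rw [h8, map_add, map_add]
          simp_rw [hsplit, mul_add]
          rw [Finset.sum_add_distrib, Finset.sum_add_distrib]
          have hT3 : ∑ k ∈ Finset.range (D + 1),
              u ^ (D - k) * homogeneousComponent (e + k) (Q * g) = W * g := by
            have hterm : ∀ k, homogeneousComponent (e + k) (Q * g)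
                = homogeneousComponent k Q * g := by
              intro k
              rw [mul_comm Q g, comp_mul_homog hg, mul_comm g]
            simp_rw [hterm]
            rw [← hQsum, Finset.sum_mul]

            apply Finset.sum_congr rfl
            intro k _
            ring
          have hA1 : ∑ k ∈ Finset.range (D + 1),
              u ^ (D - k) * homogeneousComponent (e + k) (SQ (n + 1) g)
              = ∑ k ∈ Finset.range D,
                u ^ (D - k) * homogeneousComponent (e + k) (SQ (n + 1) g) := by
            rw [Finset.sum_range_succ]
            rw [comp_SQ_eq_zero hg (Or.inr (by omega)), mul_zero, add_zero]
          have hA2 : ∑ k ∈ Finset.range (D + 1),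
              u ^ (D - k) * homogeneousComponent (e + k) (u * SQ (n + 1) g)
              = ∑ k ∈ Finset.range D,
                u ^ (D - k) * homogeneousComponent (e + k) (SQ (n + 1) g) := by
            rw [Finset.sum_range_succ']
            have h0 : homogeneousComponent (e + 0) (u * SQ (n + 1) g) = 0 := by
              rcases Nat.eq_zero_or_pos e with he0 | hepos
              · rw [he0]
                exact comp_mul_homog_lt hu1 _ (by omega)
              · have h4 : e + 0 = 1 + (e - 1) := by omega
                rw [h4, comp_mul_homog hu1]
                rw [comp_SQ_eq_zero hg (Or.inl (by omega)), mul_zero]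
            rw [h0, mul_zero, add_zero]
            apply Finset.sum_congr rfl
            intro k hk
            have hkD : k < D := Finset.mem_range.1 hk
            have h5 : e + (k + 1) = 1 + (e + k) := by omega
            rw [h5, comp_mul_homog hu1]
            have h6 : D - (k + 1) + 1 = D - k := by omega
            rw [← h6, pow_succ]
            ring
          rw [hA1, hA2, CharTwo.add_self_eq_zero, zero_add]
          exact hT3
        have hTI : W * g ∈ I := by
          rw [← hT]
          exact Ideal.sum_mem _ (fun k _ => Ideal.mul_mem_left _ _ (hbk k))
        have hW_props : ∀ w ∈ s.map (fun v => u + v), w ≠ 0 ∧ w.IsHomogeneous 1 := by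
          intro w hw
          obtain ⟨v, hv, rfl⟩ := Multiset.mem_map.1 hw
          refine ⟨?_, hu1.add (hs_homog v hv)⟩
          intro h0
          apply hs_proj v hv
          have h9 : proj n (u + v) = proj n v := by
            rw [map_add]
            have h10 : proj n u = 0 := by
              rw [hu]
              simp [proj]
            rw [h10, zero_add]
          rw [← h9, h0, map_zero]
        have hgI : g ∈ I := hpeel _ hW_props g hTI
        have hPI : P ∈ I := by
          have h11 : F + u * g = P := by
            rw [hFeq, add_assoc, CharTwo.add_self_eq_zero, add_zero]
          rw [← h11]
          exact Ideal.add_mem _ hFI (Ideal.mul_mem_left _ _ hgI)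
        exact hnoprod s (fun v hv => ⟨hs_ne v hv, hs_homog v hv⟩) hPI

end

end Serre6

/-- Serre's corollary: a nonzero homogeneous ideal of `F₂[x₁,…,xₙ]` stable under the total
Steenrod square `xᵢ ↦ xᵢ + xᵢ²` contains a product of nonzero degree-one homogeneous
polynomials (empty only if the ideal is the whole ring). -/
theorem stmt6 (n : ℕ) (I : Ideal (MvPolynomial (Fin n) (ZMod 2))) (hI : I ≠ ⊥)
    (hhom : I = Ideal.span {f | f ∈ I ∧ ∃ d, MvPolynomial.IsHomogeneous f d})
    (hφ : ∀ f ∈ I,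
      MvPolynomial.aeval (fun i => MvPolynomial.X i + MvPolynomial.X i ^ 2) f ∈ I) :
    ∃ s : Multiset (MvPolynomial (Fin n) (ZMod 2)),
      (∀ f ∈ s, f ≠ 0 ∧ MvPolynomial.IsHomogeneous f 1) ∧ s.prod ∈ I ∧ (s = 0 → I = ⊤) := by
  exact Serre6.main n I hI hhom hφ
end

section
/- Let C be a small category and R a ring. If F is an injective object of the functor category C ⥤ Mod_R, then for every object c of C the R-module F(c) is injective. -/
open CategoryTheory
open CategoryTheory.Limits

universe u v

namespace Stmt11Aux

variable (R : Type v) [Ring R]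

/-- The injective cogenerator `Hom_ℤ(R, ℚ/ℤ)` of `Mod_R`,
as a left `R`-module via right multiplication. -/
def Cog : Type v := R →+ AddCircle (1 : ℚ)

instance : FunLike (Cog R) R (AddCircle (1 : ℚ)) :=
  inferInstanceAs (FunLike (R →+ AddCircle (1 : ℚ)) _ _)

instance : AddMonoidHomClass (Cog R) R (AddCircle (1 : ℚ)) :=
  inferInstanceAs (AddMonoidHomClass (R →+ AddCircle (1 : ℚ)) _ _)

instance : AddCommGroup (Cog R) :=
  inferInstanceAs (AddCommGroup (R →+ AddCircle (1 : ℚ)))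

@[ext] lemma Cog.ext {c c' : Cog R} (h : ∀ s, c s = c' s) : c = c' :=
  AddMonoidHom.ext h

variable {R}

@[simp] lemma Cog.add_apply (c c' : Cog R) (s : R) : (c + c') s = c s + c' s := rfl
@[simp] lemma Cog.zero_apply (s : R) : (0 : Cog R) s = 0 := rfl

variable (R)

instance : SMul R (Cog R) :=
  ⟨fun r c => (c : R →+ AddCircle (1 : ℚ)).comp (AddMonoidHom.mulRight r)⟩

@[simp] lemma Cog.smul_apply (r : R) (c : Cog R) (s : R) : (r • c) s = c (s * r) := rfl

instance : Module R (Cog R) where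
  one_smul c := by ext s; simp
  mul_smul r r' c := by ext s; simp [mul_assoc]
  smul_zero r := by ext s; simp
  smul_add r c c' := by ext s; simp
  add_smul r r' c := by ext s; simp [mul_add]
  zero_smul c := by ext s; simp

/-- Baer's criterion holds for `Cog R`. -/
theorem cog_baer : Module.Baer R (Cog R) := by
  intro I g
  have hdiv : Module.Baer ℤ (AddCircle (1 : ℚ)) := Module.Baer.of_divisible _
  -- the additive map `I →+ ℚ/ℤ`, `i ↦ g i 1`
  let g'' : I →+ AddCircle (1 : ℚ) :=
    { toFun := fun i => g i 1
      map_zero' := by simp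
      map_add' := fun i j => by simp }
  obtain ⟨h, hh⟩ := hdiv.extension_property_addMonoidHom
    (I.subtype.toAddMonoidHom) (Subtype.coe_injective) g''
  refine ⟨{ toFun := fun r => (h.comp (AddMonoidHom.mulRight r) : Cog R)
            map_add' := fun r r' => by
              ext s
              show h (s * (r + r')) = h (s * r) + h (s * r')
              rw [mul_add, map_add]
            map_smul' := fun r' r => by
              ext s
              show h (s * (r' * r)) = h ((s * r') * r)
              rw [mul_assoc] }, ?_⟩
  intro x hx
  ext s
  have hsx : s * x ∈ I := I.smul_mem s hx
  have h1 : h (s * x) = g ⟨s * x, hsx⟩ 1 := by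
    have := DFunLike.congr_fun hh (⟨s * x, hsx⟩ : I)
    exact this
  have h2 : (⟨s * x, hsx⟩ : I) = s • (⟨x, hx⟩ : I) := by
    ext; simp [smul_eq_mul]
  have h3 : g ⟨s * x, hsx⟩ 1 = g ⟨x, hx⟩ s := by
    rw [h2, map_smul]
    show (g ⟨x, hx⟩) (1 * s) = (g ⟨x, hx⟩) s
    rw [one_mul]
  show h (s * x) = (g ⟨x, hx⟩) s
  rw [h1, h3]

instance : Module.Injective R (Cog R) := (cog_baer R).injective

/-- `Cog R` separates points. -/
theorem cog_separates {N : Type v} [AddCommGroup N] [Module R N] {x : N} (hx : x ≠ 0) :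
    ∃ φ : N →ₗ[R] Cog R, φ x ≠ 0 := by
  obtain ⟨χ, hχ⟩ := CharacterModule.exists_character_apply_ne_zero_of_ne_zero hx
  refine ⟨{ toFun := fun n =>
              ({ toFun := fun s => χ (s • n)
                 map_zero' := by simp
                 map_add' := fun s s' => by simp [add_smul] } : Cog R)
            map_add' := fun n n' => by
              ext s
              show χ (s • (n + n')) = χ (s • n) + χ (s • n')
              rw [smul_add, map_add]
            map_smul' := fun r n => by
              ext s
              show χ (s • (r • n)) = χ ((s * r) • n)
              rw [smul_smul] }, ?_⟩
  intro h
  apply hχ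
  have h1 : χ ((1 : R) • x) = 0 := DFunLike.congr_fun h (1 : R)
  simpa using h1

/-- The cogenerator as an object of `ModuleCat R`. -/
noncomputable def cogObj : ModuleCat.{v} R := ModuleCat.of R (Cog R)

instance : CategoryTheory.Injective (cogObj R) :=
  Module.injective_object_of_injective_module R (Cog R)

variable {C : Type u} [SmallCategory C] (F : C ⥤ ModuleCat.{v} R)

variable {R}

/-- The pointwise-product test functor: `t ↦ ∏_{φ : F t →ₗ Cog R} Cog R`. -/
noncomputable def bigG : C ⥤ ModuleCat.{v} R where
  obj t := ∏ᶜ fun _ : (F.obj t →ₗ[R] Cog R) => cogObj R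
  map {t t'} u := Pi.lift fun ψ => Pi.π _ (ψ.comp (F.map u).hom)
  map_id t := by
    apply Pi.hom_ext
    intro ψ
    simp
  map_comp {t t' t''} u u' := by
    apply Pi.hom_ext
    intro ψ
    simp only [limit.lift_π, Fan.mk_π_app, Category.assoc]
    simp
    rfl

/-- The canonical natural transformation `F ⟶ bigG F`. -/
noncomputable def eta : F ⟶ bigG F where
  app t := Pi.lift fun φ => (ModuleCat.ofHom φ : F.obj t ⟶ cogObj R)
  naturality t t' u := by
    apply Pi.hom_ext
    intro ψ
    simp [bigG]
    rfl

instance eta_mono : Mono (eta F) := by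
  haveI : ∀ t, Mono ((eta F).app t) := by
    intro t
    rw [ModuleCat.mono_iff_injective]
    intro x y hxy
    by_contra hne
    obtain ⟨φ, hφ⟩ := cog_separates R (N := F.obj t) (x := x - y) (sub_ne_zero.mpr hne)
    apply hφ
    have h0 : ((eta F).app t ≫ Pi.π _ φ) x = ((eta F).app t ≫ Pi.π _ φ) y := by
      simp only [CategoryTheory.comp_apply, Function.comp_apply]
      exact congrArg (ConcreteCategory.hom (Pi.π (fun _ => cogObj R) φ : (bigG F).obj t ⟶ cogObj R)) hxy
    rw [eta] at h0
    simp only [limit.lift_π, Fan.mk_π_app] at h0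
    have h1 : φ x = φ y := by erw [limit.lift_π] at h0; exact h0
    rw [map_sub, h1, sub_self]
  exact NatTrans.mono_of_mono_app _

end Stmt11Aux

open Stmt11Aux

/-- If `F` is an injective object of the functor category `C ⥤ Mod_R` (`C` small),
then each `F.obj c` is an injective `R`-module. -/
theorem stmt11 (C : Type u) [SmallCategory C] (R : Type v) [Ring R]
    (F : C ⥤ ModuleCat.{v} R) (hF : Injective F) (c : C) : Injective (F.obj c) := by
  obtain ⟨r, hr⟩ := hF.factors (𝟙 F) (eta F)
  have hinj : Injective ((bigG F).obj c) := by
    dsimp [bigG]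
    infer_instance
  constructor
  intro X Y g f hf
  obtain ⟨h, hh⟩ := hinj.factors (g ≫ (eta F).app c) f
  refine ⟨h ≫ r.app c, ?_⟩
  rw [← Category.assoc, hh, Category.assoc]
  have : (eta F).app c ≫ r.app c = 𝟙 (F.obj c) := by
    rw [← NatTrans.comp_app, hr]
    rfl
  rw [this, Category.comp_id]
end
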